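/- Let L be a Lie ring and H a subring generated by m elements h₁,...,h_m such that every Lie commutator in the h_i is ad-nilpotent in L of index at most n. If H is nilpotent of class c, then there is a number u depending only on c, m, n such that [L, H, H, ..., H] = 0 with u copies of H. -/

import Mathlib

/-- `adIter a y k = [y, a, a, ..., a]` with `k` copies of `a`. -/
def adIter {L : Type} [LieRing L] (a y : L) : ℕ → L
  | 0 => y
  | k + 1 => ⁅adIter a y k, a⁆

/-- `chainBr y f u = [y, f 0, f 1, ..., f (u-1)]`. -/
def chainBr {L : Type} [LieRing L] (y : L) (f : ℕ → L) : ℕ → L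
  | 0 => y
  | k + 1 => ⁅chainBr y f k, f k⁆

/-- The Lie commutators (iterated brackets) in the elements `hs`. -/
inductive IsLieCommWord {L : Type} [LieRing L] {m : ℕ} (hs : Fin m → L) : L → Prop
  | gen (i : Fin m) : IsLieCommWord hs (hs i)
  | br {x y : L} : IsLieCommWord hs x → IsLieCommWord hs y → IsLieCommWord hs ⁅x, y⁆

/-- Membership in the Lie subring generated by the elements `hs`. -/
inductive InLieSubring {L : Type} [LieRing L] {m : ℕ} (hs : Fin m → L) : L → Prop
  | gen (i : Fin m) : InLieSubring hs (hs i)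
  | zero : InLieSubring hs 0
  | add {x y : L} : InLieSubring hs x → InLieSubring hs y → InLieSubring hs (x + y)
  | neg {x : L} : InLieSubring hs x → InLieSubring hs (-x)
  | br {x y : L} : InLieSubring hs x → InLieSubring hs y → InLieSubring hs ⁅x, y⁆

/-! Expanding each entry of `H` in the additive span of the words in the generators, it suffices
to kill brackets `[y, w₁, …, w_u]` of words. Words of weight `> c` vanish, since they lie in the
span of left-normed brackets of at least `c + 1` generators; there are only `N` words of weight
`≤ c`. Fix any linear order on words and collect: swapping an adjacent pair `a, b` with `b < a`
changes the bracket by the term in which `a, b` is merged into the single word `a * b`. Both moves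
preserve the total weight, and by induction on (length, inversions) one is reduced to sorted
sequences. A sorted sequence of more than `N (n - 1)` words contains `n` consecutive copies of some
word `w` and vanishes because `ad w` is nilpotent of index `n`. So `u = c N (n - 1) + 1` works. -/

namespace List

variable {β : Type*}

section LinearOrder

variable [LinearOrder β]

def inversions : List β → ℕ
  | [] => 0
  | x :: xs => xs.countP (· < x) + inversions xs

lemma inversions_append_cons_cons_lt {a b : β} (h : b < a) (p q : List β) :
    inversions (p ++ b :: a :: q) < inversions (p ++ a :: b :: q) := by
  induction p with
  | nil => grind [inversions]
  | cons x p ih => simp only [cons_append, inversions, countP_append, countP_cons]; omega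

lemma pairwise_le_or_exists_lt (l : List β) :
    l.Pairwise (· ≤ ·) ∨ ∃ p a b q, l = p ++ a :: b :: q ∧ b < a := by
  induction l with
  | nil => exact Or.inl Pairwise.nil
  | cons x xs ih =>
    rcases ih with hxs | ⟨p, a, b, q, rfl, hba⟩
    · cases xs with
      | nil => exact Or.inl (pairwise_singleton _ x)
      | cons y ys =>
        rcases le_or_gt x y with hxy | hyx
        · refine Or.inl (pairwise_cons.mpr ⟨fun z hz => ?_, hxs⟩)
          rcases mem_cons.mp hz with rfl | hz
          · exact hxy
          · exact hxy.trans (rel_of_pairwise_cons hxs hz)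
        · exact Or.inr ⟨[], x, y, ys, rfl, hyx⟩
    · exact Or.inr ⟨x :: p, a, b, q, rfl, hba⟩

lemma Pairwise.exists_eq_append_replicate_append {l : List β} (hl : l.Pairwise (· ≤ ·)) {a : β}
    {k : ℕ} (hk : k ≤ l.count a) : ∃ p q, l = p ++ replicate k a ++ q ∧ ∀ b ∈ p, b < a := by
  induction l generalizing k with
  | nil => exact ⟨[], [], by simp_all, by simp⟩
  | cons x xs ih =>
    obtain ⟨hx, hxs⟩ := pairwise_cons.mp hl
    rcases k with _ | k
    · exact ⟨[], x :: xs, by simp, by simp⟩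
    rcases lt_trichotomy x a with hxa | rfl | hax
    · obtain ⟨p, q, rfl, hp⟩ := ih hxs (k := k + 1) (by rwa [count_cons_of_ne hxa.ne] at hk)
      exact ⟨x :: p, q, rfl, by simpa [hxa] using hp⟩
    · obtain ⟨p, q, rfl, hp⟩ := ih hxs (k := k) (by rw [count_cons_self] at hk; omega)
      obtain rfl : p = [] := eq_nil_iff_forall_not_mem.mpr fun b hb =>
        (hp b hb).not_ge (hx b (by simp [hb]))
      exact ⟨[], q, by simp [replicate_succ], by simp⟩
    · have : a ∉ x :: xs := fun ha => by
        rcases mem_cons.mp ha with rfl | ha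
        · exact hax.false
        · exact (hax.trans_le (hx a ha)).false
      simp [count_eq_zero_of_not_mem this] at hk

end LinearOrder

lemma exists_le_count_of_mul_lt_length [DecidableEq β] {s : Finset β} {l : List β}
    (hl : ∀ a ∈ l, a ∈ s) {n : ℕ} (h : s.card * (n - 1) < l.length) : ∃ a, n ≤ l.count a := by
  by_contra! hcount
  have : l.length ≤ s.card * (n - 1) :=
    calc l.length = ∑ a ∈ l.toFinset, l.count a := (sum_toFinset_count_eq_length l).symm
      _ ≤ ∑ a ∈ s, l.count a := Finset.sum_le_sum_of_subset fun a ha => hl a (mem_toFinset.mp ha)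
      _ ≤ ∑ _a ∈ s, (n - 1) := Finset.sum_le_sum fun a _ => Nat.le_sub_one_of_lt (hcount a)
      _ = s.card * (n - 1) := by rw [Finset.sum_const, smul_eq_mul]
  omega

end List

open List

section LieFoldl

variable {L : Type*} [LieRing L]

def lieFoldl (y : L) (l : List L) : L := l.foldl (⁅·, ·⁆) y

@[simp] lemma lieFoldl_cons (y x : L) (l : List L) : lieFoldl y (x :: l) = lieFoldl ⁅y, x⁆ l := rfl

lemma lieFoldl_append (y : L) (l₁ l₂ : List L) :
    lieFoldl y (l₁ ++ l₂) = lieFoldl (lieFoldl y l₁) l₂ :=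
  foldl_append

lemma lieFoldl_concat (y x : L) (l : List L) : lieFoldl y (l ++ [x]) = ⁅lieFoldl y l, x⁆ := by
  rw [lieFoldl_append]; rfl

@[simp] lemma zero_lieFoldl (l : List L) : lieFoldl 0 l = 0 := by
  induction l with
  | nil => rfl
  | cons x l ih => rwa [lieFoldl_cons, zero_lie]

lemma add_lieFoldl (y z : L) (l : List L) : lieFoldl (y + z) l = lieFoldl y l + lieFoldl z l := by
  induction l generalizing y z with
  | nil => rfl
  | cons x l ih => simp only [lieFoldl_cons, add_lie, ih]

lemma lieFoldl_eq_zero_of_zero_mem {y : L} {l : List L} (h : (0 : L) ∈ l) : lieFoldl y l = 0 := by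
  obtain ⟨p, q, rfl⟩ := append_of_mem h
  simp [lieFoldl_append]

lemma lieFoldl_append_cons_cons (y a b : L) (p q : List L) :
    lieFoldl y (p ++ a :: b :: q) =
      lieFoldl y (p ++ b :: a :: q) + lieFoldl y (p ++ ⁅a, b⁆ :: q) := by
  have jacobi (z : L) : ⁅⁅z, a⁆, b⁆ = ⁅⁅z, b⁆, a⁆ + ⁅z, ⁅a, b⁆⁆ := by
    rw [leibniz_lie z a b, ← lie_skew ⁅z, b⁆ a]
    abel
  simp only [lieFoldl_append, lieFoldl_cons, jacobi, add_lieFoldl]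

lemma lie_mem_span_image2 {S T : Set L} {x z : L} (hx : x ∈ Submodule.span ℤ S)
    (hz : z ∈ Submodule.span ℤ T) : ⁅x, z⁆ ∈ Submodule.span ℤ (Set.image2 (⁅·, ·⁆) S T) := by
  have := Submodule.map₂_span_span ℤ (LieModule.toEnd ℤ L L : L →ₗ[ℤ] Module.End ℤ L) S T
  simp only [LieHom.coe_toLinearMap, LieModule.toEnd_apply_apply] at this
  exact this ▸ Submodule.apply_mem_map₂ _ hx hz

lemma lieFoldl_mem_span {β : Type*} (f : β → L) (y : L) {l : List L}
    (hl : ∀ a ∈ l, a ∈ Submodule.span ℤ (Set.range f)) :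
    lieFoldl y l ∈
      Submodule.span ℤ {x | ∃ ws : List β, ws.length = l.length ∧ lieFoldl y (ws.map f) = x} := by
  induction l using reverseRecOn with
  | nil => exact Submodule.subset_span ⟨[], rfl, rfl⟩
  | append_singleton l a ih =>
    rw [lieFoldl_concat]
    refine Submodule.span_le.mpr ?_
      (lie_mem_span_image2 (ih fun b hb => hl b (by simp [hb])) (hl a (by simp)))
    rintro _ ⟨_, ⟨ws, hws, rfl⟩, _, ⟨w, rfl⟩, rfl⟩
    exact Submodule.subset_span ⟨ws ++ [w], by simp [hws], by simp [lieFoldl_concat]⟩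

lemma lieFoldl_eq_zero_of_forall_map {β : Type*} (f : β → L) (y : L) {l : List L}
    (hl : ∀ a ∈ l, a ∈ Submodule.span ℤ (Set.range f))
    (h : ∀ ws : List β, ws.length = l.length → lieFoldl y (ws.map f) = 0) : lieFoldl y l = 0 := by
  have hspan : Submodule.span ℤ
      {x | ∃ ws : List β, ws.length = l.length ∧ lieFoldl y (ws.map f) = x} = ⊥ := by
    rw [Submodule.span_eq_bot]
    rintro _ ⟨ws, hws, rfl⟩
    exact h ws hws
  simpa [hspan] using lieFoldl_mem_span f y hl

end LieFoldl

namespace FreeMagma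

variable {α : Type*}

lemma finite_setOf_length_le [Finite α] (k : ℕ) : {w : FreeMagma α | w.length ≤ k}.Finite := by
  induction k with
  | zero => simp [(length_pos _).ne']
  | succ k ih =>
    refine ((Set.finite_range of).union (ih.image2 (· * ·) ih)).subset fun w hw => ?_
    cases w with
    | of a => exact Or.inl ⟨a, rfl⟩
    | mul x y =>
      have := x.length_pos
      have := y.length_pos
      simp only [Set.mem_ofPred_eq, mul_eq, length] at hw
      exact Or.inr ⟨x, (by omega : x.length ≤ k), y, (by omega : y.length ≤ k), rfl⟩

lemma length_le_sum_map_length (l : List (FreeMagma α)) : l.length ≤ (l.map length).sum := by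
  simpa using List.length_le_sum_of_one_le (l.map length) (by simpa using fun w _ => w.length_pos)

def lieEval {L : Type*} [LieRing L] (e : α → L) : FreeMagma α → L
  | of a => e a
  | x * y => ⁅lieEval e x, lieEval e y⁆

@[simp] lemma lieEval_mul {L : Type*} [LieRing L] (e : α → L) (x y : FreeMagma α) :
    (x * y).lieEval e = ⁅x.lieEval e, y.lieEval e⁆ :=
  rfl

end FreeMagma

section LeftNormed

open FreeMagma

variable {α L : Type*} [LieRing L] (e : α → L)

def leftNormedSpan (k : ℕ) : Submodule ℤ L :=
  Submodule.span ℤ {x | ∃ (a : α) (gs : List α), k ≤ gs.length + 1 ∧ lieFoldl (e a) (gs.map e) = x}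

variable {e}

lemma lie_mem_leftNormedSpan_succ {k : ℕ} {x : L} (hx : x ∈ leftNormedSpan e k) (a : α) :
    ⁅x, e a⁆ ∈ leftNormedSpan e (k + 1) := by
  refine Submodule.span_le.mpr ?_ (lie_mem_span_image2 hx (Submodule.mem_span_singleton_self _))
  rintro _ ⟨_, ⟨b, gs, hk, rfl⟩, _, rfl, rfl⟩
  exact Submodule.subset_span ⟨b, gs ++ [a], by simpa using hk, by simp [lieFoldl_concat]⟩

lemma lie_lieEval_mem_leftNormedSpan (w : FreeMagma α) {k : ℕ} {x : L}
    (hx : x ∈ leftNormedSpan e k) : ⁅x, w.lieEval e⁆ ∈ leftNormedSpan e (k + w.length) := by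
  induction w using FreeMagma.rec generalizing k x with
  | of a => exact lie_mem_leftNormedSpan_succ hx a
  | mul w₁ w₂ ih₁ ih₂ =>
    have expand : ⁅x, ⁅w₁.lieEval e, w₂.lieEval e⁆⁆ =
        ⁅⁅x, w₁.lieEval e⁆, w₂.lieEval e⁆ - ⁅⁅x, w₂.lieEval e⁆, w₁.lieEval e⁆ := by
      rw [leibniz_lie, ← lie_skew ⁅x, w₂.lieEval e⁆]
      abel
    have h₁ := ih₂ (ih₁ hx)
    have h₂ := ih₁ (ih₂ hx)
    rw [Nat.add_right_comm] at h₂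
    rw [FreeMagma.length, mul_eq, lieEval_mul, expand, ← add_assoc]
    exact sub_mem h₁ h₂

lemma lieEval_mem_leftNormedSpan (w : FreeMagma α) : w.lieEval e ∈ leftNormedSpan e w.length := by
  induction w using FreeMagma.rec with
  | of a => exact Submodule.subset_span ⟨a, [], le_rfl, rfl⟩
  | mul w₁ w₂ ih₁ _ => exact lie_lieEval_mem_leftNormedSpan w₂ ih₁

lemma lieEval_eq_zero_of_lt_length {c : ℕ}
    (hnil : ∀ (a : α) (gs : List α), c ≤ gs.length → lieFoldl (e a) (gs.map e) = 0)
    {w : FreeMagma α} (hw : c < w.length) : w.lieEval e = 0 := by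
  have hbot : leftNormedSpan e w.length = ⊥ := by
    rw [leftNormedSpan, Submodule.span_eq_bot]
    rintro _ ⟨a, gs, hk, rfl⟩
    exact hnil a gs (by omega)
  simpa [hbot] using lieEval_mem_leftNormedSpan (e := e) w

end LeftNormed

section Engel

variable {L : Type} [LieRing L]

lemma chainBr_eq_lieFoldl (y : L) (f : ℕ → L) (u : ℕ) :
    chainBr y f u = lieFoldl y ((range u).map f) := by
  induction u with
  | zero => rfl
  | succ u ih => rw [chainBr, ih, range_succ, map_append, map_singleton, lieFoldl_concat]

lemma adIter_eq_lieFoldl (a y : L) (k : ℕ) : adIter a y k = lieFoldl y (replicate k a) := by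
  induction k with
  | zero => rfl
  | succ k ih => rw [adIter, ih, replicate_succ', lieFoldl_concat]

lemma chainBr_getD_eq_lieFoldl_take (y : L) {l : List L} {k : ℕ} (hk : k ≤ l.length) :
    chainBr y (fun i => l.getD i 0) k = lieFoldl y (l.take k) := by
  induction k with
  | zero => rfl
  | succ k ih =>
    rw [chainBr, ih (by omega), take_add_one, getElem?_eq_getElem (by omega), Option.toList_some,
      lieFoldl_concat, getD_eq_getElem _ _ (by omega)]

lemma lieFoldl_eq_zero_of_le_length {P : L → Prop} {c : ℕ} (hP : P 0)
    (hnil : ∀ f : ℕ → L, (∀ i, i ≤ c → P (f i)) → chainBr (f 0) (fun k => f (k + 1)) c = 0)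
    {z : L} {l : List L} (hz : P z) (hl : ∀ a ∈ l, P a) (hc : c ≤ l.length) :
    lieFoldl z l = 0 := by
  have hP : ∀ i, P ((z :: l).getD i 0) := by
    intro i
    rcases lt_or_ge i (z :: l).length with hi | hi
    · rw [getD_eq_getElem _ _ hi]
      rcases mem_cons.mp (getElem_mem hi) with h | h
      · rwa [h]
      · exact hl _ h
    · rwa [getD_eq_default _ _ hi]
  have hprefix := hnil (fun i => (z :: l).getD i 0) fun i _ => hP i
  simp only [getD_cons_zero, getD_cons_succ] at hprefix
  rw [chainBr_getD_eq_lieFoldl_take z hc] at hprefix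
  rw [← take_append_drop c l, lieFoldl_append, hprefix, zero_lieFoldl]

namespace FreeMagma

lemma isLieCommWord_lieEval {m : ℕ} (hs : Fin m → L) (w : FreeMagma (Fin m)) :
    IsLieCommWord hs (w.lieEval hs) := by
  induction w using FreeMagma.rec with
  | of i => exact .gen i
  | mul x y hx hy => exact .br hx hy

lemma mem_span_range_lieEval {m : ℕ} {hs : Fin m → L} {x : L} (hx : InLieSubring hs x) :
    x ∈ Submodule.span ℤ (Set.range (lieEval hs)) := by
  induction hx with
  | gen i => exact Submodule.subset_span ⟨of i, rfl⟩
  | zero => exact zero_mem _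
  | add _ _ hx hy => exact add_mem hx hy
  | neg _ hx => exact neg_mem hx
  | br _ _ hx hy =>
    refine Submodule.span_le.mpr ?_ (lie_mem_span_image2 hx hy)
    rintro _ ⟨_, ⟨x, rfl⟩, _, ⟨y, rfl⟩, rfl⟩
    exact Submodule.subset_span ⟨x * y, rfl⟩

theorem lieFoldl_map_lieEval_eq_zero {α : Type*} [LinearOrder (FreeMagma α)] (e : α → L)
    {c n : ℕ} (s : Finset (FreeMagma α)) (hshort : ∀ w : FreeMagma α, w.length ≤ c → w ∈ s)
    (had : ∀ (w : FreeMagma α) (y : L), adIter (w.lieEval e) y n = 0)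
    (hvanish : ∀ w : FreeMagma α, c < w.length → w.lieEval e = 0) (y : L)
    (l : List (FreeMagma α)) (hl : c * (s.card * (n - 1)) < (l.map length).sum) :
    lieFoldl y (l.map (lieEval e)) = 0 := by
  by_cases hlong : ∃ w ∈ l, c < w.length
  · obtain ⟨w, hw, hcw⟩ := hlong
    exact lieFoldl_eq_zero_of_zero_mem (mem_map.mpr ⟨w, hw, hvanish w hcw⟩)
  push Not at hlong
  rcases l.pairwise_le_or_exists_lt with hsort | ⟨p, a, b, q, rfl, hba⟩
  · have hlen : s.card * (n - 1) < l.length := by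
      refine Nat.lt_of_mul_lt_mul_left (hl.trans_le ?_)
      simpa [mul_comm] using sum_le_card_nsmul (l.map length) c (by simpa using hlong)
    obtain ⟨a, ha⟩ := exists_le_count_of_mul_lt_length (fun w hw => hshort w (hlong w hw)) hlen
    obtain ⟨p, q, rfl, -⟩ := hsort.exists_eq_append_replicate_append ha
    simp [lieFoldl_append, ← adIter_eq_lieFoldl, had]
  · have hswap := lieFoldl_map_lieEval_eq_zero e s hshort had hvanish y (p ++ b :: a :: q)
      (by simpa [Nat.add_left_comm] using hl)
    have hmerge := lieFoldl_map_lieEval_eq_zero e s hshort had hvanish y (p ++ a * b :: q)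
      (by simpa [Nat.add_assoc] using hl)
    simp only [map_append, map_cons, lieEval_mul] at hswap hmerge ⊢
    rw [lieFoldl_append_cons_cons, hswap, hmerge, add_zero]
termination_by (l.length, l.inversions)
decreasing_by
  all_goals subst_vars
  · rw [Prod.lex_def]
    exact Or.inr ⟨by simp, inversions_append_cons_cons_lt hba p q⟩
  · exact Prod.Lex.left _ _ (by simp)

end FreeMagma

end Engel

/-- if `H = ⟨h₁, ..., h_m⟩` is a subring of a Lie ring `L` such that every
Lie commutator in the `h_i` is ad-nilpotent in `L` of index at most `n`, and `H` is
nilpotent of class `c` (every left-normed bracket of `c+1` elements of `H` vanishes),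
then there is `u = u(c, m, n)` with `[L, H, ..., H] = 0` (`u` copies of `H`). -/
theorem lie_subring_engelizes_ambient_ring
    (c m n : ℕ) :
    ∃ u : ℕ, ∀ (L : Type) [inst : LieRing L] (hs : Fin m → L),
      (∀ x : L, IsLieCommWord hs x → ∀ y : L, adIter x y n = 0) →
      (∀ f : ℕ → L, (∀ i, i ≤ c → InLieSubring hs (f i)) →
        chainBr (f 0) (fun k => f (k + 1)) c = 0) →
      ∀ (y : L) (f : ℕ → L), (∀ i, InLieSubring hs (f i)) → chainBr y f u = 0 := by
  set s := (FreeMagma.finite_setOf_length_le (α := Fin m) c).toFinset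
  refine ⟨c * (s.card * (n - 1)) + 1, fun L _ hs had hnil y f hf => ?_⟩
  let : LinearOrder (FreeMagma (Fin m)) := WellOrderingRel.isWellOrder.linearOrder
  have hvanish (w : FreeMagma (Fin m)) (hw : c < w.length) : w.lieEval hs = 0 :=
    lieEval_eq_zero_of_lt_length (fun a gs hgs => lieFoldl_eq_zero_of_le_length .zero hnil
      (.gen a) (by simpa using fun i _ => .gen i) (by simpa using hgs)) hw
  rw [chainBr_eq_lieFoldl]
  refine lieFoldl_eq_zero_of_forall_map (FreeMagma.lieEval hs) y (fun x hx => ?_) fun ws hws => ?_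
  · obtain ⟨i, -, rfl⟩ := mem_map.mp hx
    exact FreeMagma.mem_span_range_lieEval (hf i)
  · refine FreeMagma.lieFoldl_map_lieEval_eq_zero hs s (by simp [s])
      (fun w => had _ (FreeMagma.isLieCommWord_lieEval hs w)) hvanish y ws ?_
    simp only [length_map, length_range] at hws
    have := FreeMagma.length_le_sum_map_length ws
    omega
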